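/- The direction is an invariant of (Rⁿ, R)-knots: if two continuous embeddings f, g : R → Rⁿ are ambient isotopic (via an isotopy of (R′)ⁿ, where R′ extends R by an initial open interval), then D(f) = D(g). -/

import Mathlib

open Set Topology
noncomputable section

/-- The first uncountable ordinal ω₁. -/
def omega1 : Ordinal := Ordinal.omega 1

/-- The closed long ray `R = W(ω₁) × [0,1)` with the lexicographic order. -/
def LongRay : Type 1 := {o : Ordinal // o < omega1} ×ₗ (Set.Ico (0:ℝ) 1)

instance : LinearOrder LongRay :=
  inferInstanceAs (LinearOrder ({o : Ordinal // o < omega1} ×ₗ (Set.Ico (0:ℝ) 1)))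

/-- The order topology on the long ray. -/
instance : TopologicalSpace LongRay := Preorder.topology LongRay
instance : OrderTopology LongRay := ⟨rfl⟩

/-- The minimum point `(0,0)` of the long ray. -/
instance : Zero LongRay :=
  ⟨toLex (⟨0, Ordinal.omega_pos 1⟩, ⟨0, by constructor <;> norm_num⟩)⟩

/-- A map `R → R` is cofinal if its image is unbounded in `R`. -/
def Cofinal (f : LongRay → LongRay) : Prop := ∀ b, ∃ x, b ≤ f x

/-- A map `R → R` is bounded if its image has an upper bound in `R`. -/
def BddMap (f : LongRay → LongRay) : Prop := ∃ b, ∀ x, f x ≤ b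

/-- The extended long ray `R' = ({-1} × [0,1)) ⊔ R`: the long ray with an extra
initial open interval glued below, with the order topology. -/
def LongRay' : Type 1 := (ULift.{1} (Set.Ico (0:ℝ) 1)) ⊕ₗ LongRay

instance : LinearOrder LongRay' :=
  inferInstanceAs (LinearOrder ((ULift.{1} (Set.Ico (0:ℝ) 1)) ⊕ₗ LongRay))

instance : TopologicalSpace LongRay' := Preorder.topology LongRay'
instance : OrderTopology LongRay' := ⟨rfl⟩

/-- The canonical inclusion `R ⊆ R'`. -/
def LongRay.incl (x : LongRay) : LongRay' := toLex (Sum.inr x)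

/-!
Along the isotopy, `F t := πᵢ ∘ φ_t ∘ f` is a continuous family of maps `R → R'`, and the set of
times `t` at which `F t` is bounded is open and closed in `ℝ`, so it contains both `0` and `1` or
neither. Everything rests on countable subsets of `R` and `R'` being bounded (`ω₁` has uncountable
cofinality): a countable neighbourhood basis at `t₀` then pigeonholes the neighbourhoods attached
to an unbounded family of points into a single one, which gives openness of both conditions. For
the bounded case one also needs that two closed unbounded subsets of `R` meet, so a map cannot be
`≤ b` and `≥ b' > b` on unbounded sets at once; on the remaining initial segment `[0, c]` it is
bounded by compactness.
-/

open Filter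

theorem Prod.Lex.exists_isGLB {α β : Type*} [LinearOrder α] [WellFoundedLT α] [LinearOrder β]
    (hβ : ∀ t : Set β, t.Nonempty → ∃ b, IsGLB t b) {s : Set (α ×ₗ β)} (hs : s.Nonempty) :
    ∃ x, IsGLB s x := by
  obtain ⟨a, ⟨x₀, hx₀s, rfl⟩, hmin⟩ :=
    wellFounded_lt.has_min ((fun x => (ofLex x).1) '' s) (hs.image _)
  have ha : ∀ x ∈ s, (ofLex x₀).1 ≤ (ofLex x).1 := fun x hx => not_lt.1 (hmin _ ⟨x, hx, rfl⟩)
  obtain ⟨b, hb⟩ := hβ {b | toLex ((ofLex x₀).1, b) ∈ s} ⟨(ofLex x₀).2, hx₀s⟩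
  refine ⟨toLex ((ofLex x₀).1, b), fun x hx => ?_, fun c hc => ?_⟩
  · rcases (ha x hx).lt_or_eq with hlt | heq
    · exact Prod.Lex.le_iff.2 (Or.inl hlt)
    · refine Prod.Lex.le_iff.2 (Or.inr ⟨heq, hb.1 ?_⟩)
      change toLex _ ∈ s
      rwa [heq]
  · rcases Prod.Lex.le_iff.1 (hc hx₀s) with hlt | ⟨heq, -⟩
    · exact Prod.Lex.le_iff.2 (Or.inl hlt)
    · refine Prod.Lex.le_iff.2 (Or.inr ⟨heq, hb.2 fun b' hb' => ?_⟩)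
      rcases Prod.Lex.le_iff.1 (hc hb') with hlt | ⟨-, hle⟩
      · exact absurd (heq ▸ hlt) (lt_irrefl _)
      · exact hle

theorem Set.Ico.exists_isGLB {α : Type*} [ConditionallyCompleteLinearOrder α] {a b : α}
    (hab : a < b) (t : Set (Ico a b)) (ht : t.Nonempty) : ∃ x, IsGLB t x :=
  haveI : Inhabited (Ico a b) := ⟨⟨a, le_rfl, hab⟩⟩
  ⟨sInf t, isGLB_csInf ht ⟨⟨a, le_rfl, hab⟩, fun x _ => x.2.1⟩⟩

theorem exists_mem_nhds_not_bddAbove_setOf_subset {X α : Type*} [TopologicalSpace X]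
    [FirstCountableTopology X] [LinearOrder α] [NoMaxOrder α]
    (hα : ∀ u : ℕ → α, BddAbove (range u)) {t₀ : X} {U : α → Set X} (hU : ∀ b, U b ∈ 𝓝 t₀) :
    ∃ V ∈ 𝓝 t₀, ¬BddAbove {b | V ⊆ U b} := by
  obtain ⟨B, hB⟩ := (𝓝 t₀).exists_antitone_basis
  choose m hm using fun b => hB.toHasBasis.mem_iff.1 (hU b)
  obtain ⟨k, hk⟩ : ∃ k, ¬BddAbove (m ⁻¹' {k}) := by
    by_contra! hbdd
    choose c hc using hbdd
    obtain ⟨b, hb⟩ := hα c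
    obtain ⟨b', hb'⟩ := exists_gt b
    exact (hb'.trans_le ((hc _ rfl).trans (hb ⟨_, rfl⟩))).false
  refine ⟨B k, hB.mem k, fun hbdd => hk (hbdd.mono ?_)⟩
  rintro b rfl
  exact (hm b).2

theorem IsClosed.inter_nonempty_of_not_bddAbove {D : Type*} [ConditionallyCompleteLinearOrder D]
    [TopologicalSpace D] [OrderTopology D] (hD : ∀ u : ℕ → D, BddAbove (range u))
    {E₁ E₂ : Set D} (h₁ : IsClosed E₁) (h₂ : IsClosed E₂)
    (hu₁ : ¬BddAbove E₁) (hu₂ : ¬BddAbove E₂) : (E₁ ∩ E₂).Nonempty := by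
  obtain ⟨c₀, -⟩ := nonempty_of_not_bddAbove hu₁
  choose g₁ hg₁ using not_bddAbove_iff.1 hu₁
  choose g₂ hg₂ using not_bddAbove_iff.1 hu₂
  -- alternate between the two sets: `x k ∈ E₁`, `g₂ (x k) ∈ E₂`, with a common limit
  let x : ℕ → D := fun k => Nat.rec (g₁ c₀) (fun _ p => g₁ (g₂ p)) k
  have hx_mem : ∀ k, x k ∈ E₁ := fun k => by cases k <;> exact (hg₁ _).1
  have hxy : ∀ k, x k < g₂ (x k) := fun k => (hg₂ _).2
  have hyx : ∀ k, g₂ (x k) < x (k + 1) := fun k => (hg₁ _).2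
  have hx : Tendsto x atTop (𝓝 (⨆ k, x k)) :=
    tendsto_atTop_ciSup (strictMono_nat_of_lt_succ fun k => (hxy k).trans (hyx k)).monotone
      (hD x)
  have hy : Tendsto (g₂ ∘ x) atTop (𝓝 (⨆ k, x k)) :=
    tendsto_of_tendsto_of_tendsto_of_le_of_le hx (hx.comp (tendsto_add_atTop_nat 1))
      (fun k => (hxy k).le) (fun k => (hyx k).le)
  exact ⟨_, h₁.mem_of_tendsto hx (.of_forall hx_mem),
    h₂.mem_of_tendsto hy (.of_forall fun k => (hg₂ _).1)⟩

section BoundedFamily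

variable {X D Y : Type*} [TopologicalSpace X] [FirstCountableTopology X]
  [LinearOrder Y] [TopologicalSpace Y] [OrderTopology Y] [NoMaxOrder Y] {F : X → D → Y}

theorem isOpen_setOf_not_bddAbove_range (hY : ∀ u : ℕ → Y, BddAbove (range u))
    (hF : ∀ x, Continuous (F · x)) : IsOpen {t | ¬BddAbove (range (F t))} := by
  refine isOpen_iff_mem_nhds.2 fun t₀ ht₀ => ?_
  have hunb : ∀ b, ∃ x, b < F t₀ x := fun b => by
    obtain ⟨_, ⟨x, rfl⟩, hx⟩ := not_bddAbove_iff.1 ht₀ b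
    exact ⟨x, hx⟩
  choose x hx using hunb
  obtain ⟨V, hV, hVunb⟩ := exists_mem_nhds_not_bddAbove_setOf_subset hY
    (U := fun b => {t | b < F t (x b)}) fun b => (isOpen_lt continuous_const (hF _)).mem_nhds (hx b)
  filter_upwards [hV] with t ht
  refine not_bddAbove_iff.2 fun c => ?_
  obtain ⟨b, hbV, hcb⟩ := not_bddAbove_iff.1 hVunb c
  exact ⟨F t (x b), ⟨x b, rfl⟩, hcb.trans (hbV ht)⟩

variable [ConditionallyCompleteLinearOrderBot D] [TopologicalSpace D] [OrderTopology D]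
  [NoMaxOrder D]

theorem isOpen_setOf_bddAbove_range (hD : ∀ u : ℕ → D, BddAbove (range u))
    (hFt : ∀ t, Continuous (F t)) (hFx : ∀ x, Continuous (F · x)) :
    IsOpen {t | BddAbove (range (F t))} := by
  refine isOpen_iff_mem_nhds.2 fun t₀ ⟨b₀, hb₀⟩ => ?_
  obtain ⟨b, hb⟩ := exists_gt b₀
  obtain ⟨V, hV, hVunb⟩ := exists_mem_nhds_not_bddAbove_setOf_subset hD
    (U := fun x => {t | F t x < b}) fun x =>
      (isOpen_lt (hFx x) continuous_const).mem_nhds ((hb₀ ⟨x, rfl⟩).trans_lt hb)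
  filter_upwards [hV] with t ht
  obtain ⟨b', hb'⟩ := exists_gt b
  obtain ⟨c, hc⟩ : BddAbove {x | b' ≤ F t x} := by
    by_contra hunb
    obtain ⟨x, hx₁, hx₂⟩ := (isClosed_le continuous_const (hFt t)).inter_nonempty_of_not_bddAbove
      hD (isClosed_le (hFt t) continuous_const) hunb
      (fun h => hVunb (h.mono fun x hx => (hx ht).le))
    exact (hb'.trans_le (hx₁.trans hx₂)).false
  have hcompact : BddAbove (F t '' Iic c) := by
    have : Nonempty Y := ⟨b⟩
    rw [← Icc_bot]
    exact (isCompact_Icc.image (hFt t)).bddAbove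
  refine (hcompact.union (bddAbove_Iic (a := b'))).mono ?_
  rintro _ ⟨x, rfl⟩
  rcases le_or_gt x c with hxc | hcx
  · exact Or.inl ⟨x, hxc, rfl⟩
  · exact Or.inr (not_le.1 fun h => hcx.not_ge (hc h)).le

theorem bddAbove_range_iff_of_preconnectedSpace [PreconnectedSpace X]
    (hD : ∀ u : ℕ → D, BddAbove (range u)) (hY : ∀ u : ℕ → Y, BddAbove (range u))
    (hF : Continuous (Function.uncurry F)) (t₀ t₁ : X) :
    BddAbove (range (F t₀)) ↔ BddAbove (range (F t₁)) := by
  have hclopen : IsClopen {t | BddAbove (range (F t))} :=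
    ⟨isOpen_compl_iff.1 (isOpen_setOf_not_bddAbove_range hY hF.uncurry_right),
      isOpen_setOf_bddAbove_range hD hF.uncurry_left hF.uncurry_right⟩
  rcases isClopen_iff.1 hclopen with h | h
  · exact iff_of_false (fun h₀ => h.subset h₀) (fun h₁ => h.subset h₁)
  · exact iff_of_true (h.symm.subset (mem_univ t₀)) (h.symm.subset (mem_univ t₁))

end BoundedFamily

instance : NoMaxOrder {o : Ordinal // o < omega1} :=
  ⟨fun o => ⟨⟨Order.succ o, (Cardinal.isSuccLimit_omega 1).succ_lt o.2⟩, Order.lt_succ o.1⟩⟩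

namespace LongRay

instance : NoMaxOrder LongRay :=
  inferInstanceAs (NoMaxOrder ({o : Ordinal // o < omega1} ×ₗ (Set.Ico (0:ℝ) 1)))

theorem zero_le (x : LongRay) : 0 ≤ x := by
  refine Prod.Lex.le_iff.2 ?_
  rcases (_root_.zero_le : (0 : Ordinal) ≤ (ofLex x).1).lt_or_eq with h | h
  · exact Or.inl h
  · exact Or.inr ⟨Subtype.ext h, (ofLex x).2.2.1⟩

theorem exists_isGLB (s : Set LongRay) (hs : s.Nonempty) : ∃ x, IsGLB s x :=
  Prod.Lex.exists_isGLB (Set.Ico.exists_isGLB one_pos) hs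

open Classical in
noncomputable instance : ConditionallyCompleteLinearOrderBot LongRay where
  __ := (inferInstance : LinearOrder LongRay)
  __ := LinearOrder.toLattice
  sSup s := if h : s.Nonempty ∧ BddAbove s then (exists_isGLB _ h.2).choose else 0
  sInf s := if h : s.Nonempty then (exists_isGLB s h).choose else 0
  bot := 0
  bot_le := zero_le
  isLUB_csSup s hne hbdd := by
    rw [dif_pos ⟨hne, hbdd⟩]
    exact isGLB_upperBounds.1 (exists_isGLB _ hbdd).choose_spec
  isGLB_csInf s hne _ := by
    rw [dif_pos hne]
    exact (exists_isGLB s hne).choose_spec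
  csSup_of_not_bddAbove s h := by
    rw [dif_neg fun h' => h h'.2, dif_neg fun h' => h'.1.ne_empty rfl]
  csInf_of_not_bddBelow s h := absurd ⟨0, fun x _ => zero_le x⟩ h
  csSup_empty := dif_neg fun h' => h'.1.ne_empty rfl

theorem bddAbove_range (u : ℕ → LongRay) : BddAbove (range u) := by
  have hs : ⨆ k, ((ofLex (u k)).1 : Ordinal) < omega1 :=
    Ordinal.iSup_lt_omega_one fun k => (ofLex (u k)).1.2
  obtain ⟨o, ho⟩ := exists_gt (⟨_, hs⟩ : {o : Ordinal // o < omega1})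
  refine ⟨toLex (o, ⟨0, le_rfl, one_pos⟩), ?_⟩
  rintro _ ⟨k, rfl⟩
  exact Prod.Lex.le_iff.2 (Or.inl ((Ordinal.le_iSup _ k).trans_lt ho))

theorem incl_le_incl {x y : LongRay} : x.incl ≤ y.incl ↔ x ≤ y := Sum.Lex.inr_le_inr_iff

theorem isEmbedding_incl : IsEmbedding LongRay.incl := by
  refine StrictMono.isEmbedding_of_ordConnected (fun _ _ => Sum.Lex.inr_lt_inr_iff.2) ⟨?_⟩
  rintro _ ⟨x, rfl⟩ _ - y ⟨hxy, -⟩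
  rcases y with a | z
  · exact absurd hxy Sum.Lex.not_inr_le_inl
  · exact ⟨z, rfl⟩

end LongRay

namespace LongRay'

theorem exists_le_incl (y : LongRay') : ∃ x : LongRay, y ≤ x.incl := by
  rcases y with a | x
  · exact ⟨0, Sum.Lex.inl_le_inr _ _⟩
  · exact ⟨x, le_rfl⟩

instance : NoMaxOrder LongRay' :=
  inferInstanceAs (NoMaxOrder ((ULift.{1} (Set.Ico (0:ℝ) 1)) ⊕ₗ LongRay))

theorem bddAbove_range (u : ℕ → LongRay') : BddAbove (range u) := by
  choose v hv using fun k => exists_le_incl (u k)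
  obtain ⟨b, hb⟩ := LongRay.bddAbove_range v
  refine ⟨b.incl, ?_⟩
  rintro _ ⟨k, rfl⟩
  exact (hv k).trans (LongRay.incl_le_incl.2 (hb ⟨k, rfl⟩))

end LongRay'

theorem LongRay.bddAbove_range_incl_comp {α : Type*} {h : α → LongRay} :
    BddAbove (range (LongRay.incl ∘ h)) ↔ BddAbove (range h) := by
  refine ⟨fun ⟨y, hy⟩ => ?_, fun hb => ?_⟩
  · obtain ⟨b, hb⟩ := LongRay'.exists_le_incl y
    exact ⟨b, by rintro _ ⟨x, rfl⟩; exact incl_le_incl.1 ((hy ⟨x, rfl⟩).trans hb)⟩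
  · rw [range_comp]
    exact Monotone.map_bddAbove (fun _ _ => incl_le_incl.2) hb

theorem cofinal_iff_not_bddAbove_range {h : LongRay → LongRay} :
    Cofinal h ↔ ¬BddAbove (range h) := by
  rw [not_bddAbove_iff]
  refine ⟨fun hc b => ?_, fun hu b => ?_⟩
  · obtain ⟨b', hb'⟩ := exists_gt b
    obtain ⟨x, hx⟩ := hc b'
    exact ⟨h x, ⟨x, rfl⟩, hb'.trans_le hx⟩
  · obtain ⟨_, ⟨x, rfl⟩, hx⟩ := hu b
    exact ⟨x, hx.le⟩

theorem direction_is_knot_invariant_general (n : ℕ)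
    (f g : LongRay → Fin n → LongRay)
    (hf : Topology.IsEmbedding f)
    (φ : ℝ → (Fin n → LongRay') → (Fin n → LongRay'))
    (hφcont : Continuous fun p : ℝ × (Fin n → LongRay') => φ p.1 p.2)
    (hφ0 : φ 0 = id)
    (hφ1 : ∀ x, φ 1 (fun i => LongRay.incl (f x i)) = fun i => LongRay.incl (g x i)) :
    ∀ i : Fin n, Cofinal (fun x => f x i) ↔ Cofinal (fun x => g x i) := by
  intro i
  let F : ℝ → LongRay → LongRay' := fun t x => φ t (fun j => (f x j).incl) i
  have hF : Continuous (Function.uncurry F) := by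
    have hincl := LongRay.isEmbedding_incl.continuous
    have hfc := hf.continuous
    fun_prop
  have hF₀ : F 0 = LongRay.incl ∘ fun x => f x i := by
    simp [F, hφ0, Function.comp_def]
  have hF₁ : F 1 = LongRay.incl ∘ fun x => g x i := by
    simp [F, hφ1, Function.comp_def]
  rw [cofinal_iff_not_bddAbove_range, cofinal_iff_not_bddAbove_range,
    ← LongRay.bddAbove_range_incl_comp, ← LongRay.bddAbove_range_incl_comp, ← hF₀, ← hF₁,
    bddAbove_range_iff_of_preconnectedSpace LongRay.bddAbove_range LongRay'.bddAbove_range hF]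

/-- The direction is an invariant of `(Rⁿ,R)`-knots: if two continuous embeddings
`f g : R → Rⁿ` are ambient isotopic through an isotopy of `(R')ⁿ`, then for each
coordinate `i`, `πᵢ ∘ f` is cofinal iff `πᵢ ∘ g` is. -/
theorem direction_is_knot_invariant (n : ℕ)
    (f g : LongRay → Fin n → LongRay)
    (hf : Topology.IsEmbedding f) (hg : Topology.IsEmbedding g)
    (φ : ℝ → (Fin n → LongRay') → (Fin n → LongRay'))
    (hφcont : Continuous fun p : ℝ × (Fin n → LongRay') => φ p.1 p.2)
    (hφhomeo : ∀ t ∈ Set.Icc (0:ℝ) 1, IsHomeomorph (φ t))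
    (hφ0 : φ 0 = id)
    (hφ1 : ∀ x, φ 1 (fun i => LongRay.incl (f x i)) = fun i => LongRay.incl (g x i)) :
    ∀ i : Fin n, Cofinal (fun x => f x i) ↔ Cofinal (fun x => g x i) :=
  direction_is_knot_invariant_general n f g hf φ hφcont hφ0 hφ1
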